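/- arXiv:math/0301306 — 3 statements merged into one kernel-verified Lean document; each statement's English description precedes it below -/
import Mathlib

section
/- Let χ be a Hecke character of K of type ε modulo f, and let n be a positive integer such that χ(a)^n ∈ K^× for every a ∈ I(f) and such that ζ^n = 1 for every root of unity ζ lying in K(χ). Then: (i) for every α ∈ K^× coprime to f one has χ(αO_K)^n ∈ (K^×)^n; and (ii) if a ∈ I(f) satisfies χ(a)^n ∈ (K^×)^n, then a is a principal fractional ideal. Consequently a ↦ χ(a)^n·(K^×)^n induces a well-defined injective group homomorphism I(f)/P(f) → K^×/(K^×)^n. -/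
/-! If `a = (α)` with `α = β/γ` and `β, γ` coprime to `f`, then `χ(a) = ζα` with
`ζ = ε(β)/ε(γ)` a root of unity in `K(χ)`, so `χ(a)ⁿ = αⁿ`. Conversely, suppose `χ(a)ⁿ = xⁿ`
and let `h ≠ 0` kill the class of `a`, say `aʰ = (x₀)`. As `aʰ ∈ I(f)`, `x₀` is again a
quotient of elements coprime to `f`, so `x^{nh} = χ(aʰ)ⁿ = x₀ⁿ`. Hence `(x)^{nh} = a^{nh}`,
and since the group of fractional ideals is torsion-free, `a = (x)`. So `a ↦ χ(a)ⁿ (K^×)ⁿ`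
has kernel exactly `P(f)`. -/

open NumberField FractionalIdeal
open scoped nonZeroDivisors

noncomputable section

variable {K : Type*} [Field K] [NumberField K]

/-- The group `I(f)` of invertible fractional ideals of `K` coprime to the modulus `f`:
`a ∈ I(f)` iff `a = b * c⁻¹` with `b, c` integral ideals coprime to `f`. -/
def coprimeIdeals (f : Ideal (𝓞 K)) : Subgroup (FractionalIdeal (𝓞 K)⁰ K)ˣ where
  carrier := {a | ∃ b c : Ideal (𝓞 K), IsCoprime b f ∧ IsCoprime c f ∧
    (a : FractionalIdeal (𝓞 K)⁰ K) * (c : FractionalIdeal (𝓞 K)⁰ K) =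
      (b : FractionalIdeal (𝓞 K)⁰ K)}
  one_mem' := ⟨1, 1, isCoprime_one_left, isCoprime_one_left, by simp⟩
  mul_mem' := by
    rintro a a' ⟨b, c, hb, hc, h⟩ ⟨b', c', hb', hc', h'⟩
    refine ⟨b * b', c * c', hb.mul_left hb', hc.mul_left hc', ?_⟩
    rw [coeIdeal_mul, coeIdeal_mul, Units.val_mul, mul_mul_mul_comm, h, h']
  inv_mem' := by
    rintro a ⟨b, c, hb, hc, h⟩
    refine ⟨c, b, hc, hb, ?_⟩
    have h1 : ((a⁻¹ : (FractionalIdeal (𝓞 K)⁰ K)ˣ) : FractionalIdeal (𝓞 K)⁰ K) * a = 1 := by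
      rw [← Units.val_mul, inv_mul_cancel, Units.val_one]
    calc ((a⁻¹ : (FractionalIdeal (𝓞 K)⁰ K)ˣ) : FractionalIdeal (𝓞 K)⁰ K) * b
        = ((a⁻¹ : (FractionalIdeal (𝓞 K)⁰ K)ˣ) : FractionalIdeal (𝓞 K)⁰ K) *
          ((a : FractionalIdeal (𝓞 K)⁰ K) * c) := by rw [h]
      _ = c := by rw [← mul_assoc, h1, one_mul]

/-- `χ : I(f) → ℂˣ` is a Hecke character of `K` of type `ε` modulo `f`, i.e.
`χ(αO_K) = ε(α)·α` for every `α = β/γ ∈ K^×` coprime to `f`. -/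
def IsHeckeChar [Algebra K ℂ] {f : Ideal (𝓞 K)} (ε : ((𝓞 K) ⧸ f)ˣ →* ℂˣ)
    (χ : coprimeIdeals f →* ℂˣ) : Prop :=
  ∀ β γ : 𝓞 K, IsCoprime (Ideal.span {β}) f → IsCoprime (Ideal.span {γ}) f →
  ∀ u v : ((𝓞 K) ⧸ f)ˣ, (u : (𝓞 K) ⧸ f) = Ideal.Quotient.mk f β →
    (v : (𝓞 K) ⧸ f) = Ideal.Quotient.mk f γ →
  ∀ a : coprimeIdeals f,
    ((a : (FractionalIdeal (𝓞 K)⁰ K)ˣ) : FractionalIdeal (𝓞 K)⁰ K) =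
      spanSingleton (𝓞 K)⁰ (algebraMap (𝓞 K) K β / algebraMap (𝓞 K) K γ) →
    (χ a : ℂ) = (ε u : ℂ) * ((ε v : ℂ))⁻¹ *
      algebraMap K ℂ (algebraMap (𝓞 K) K β / algebraMap (𝓞 K) K γ)

/-- `K(χ)`: the subfield of `ℂ` generated over `K` by the values of `χ`. -/
def heckeField [Algebra K ℂ] {f : Ideal (𝓞 K)} (χ : coprimeIdeals f →* ℂˣ) :
    IntermediateField K ℂ :=
  IntermediateField.adjoin K (Set.range fun a : coprimeIdeals f => ((χ a : ℂˣ) : ℂ))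

/-- `P(f)`: the subgroup of `I(f)` consisting of principal fractional ideals. -/
def principalCoprime (f : Ideal (𝓞 K)) : Subgroup ↥(coprimeIdeals f) :=
  Subgroup.comap (coprimeIdeals f).subtype (toPrincipalIdeal (𝓞 K) K).range

/-- `H(f) = {a ∈ I(f) : a² ∈ P(f)}`. -/
def genusSet (f : Ideal (𝓞 K)) : Set ↥(coprimeIdeals f) :=
  {a | a ^ 2 ∈ principalCoprime f}

/-- `T_g`: the subfield of `ℂ` generated over `K` by the values `χ(a)`, `a ∈ H(f)`. -/
def genusField [Algebra K ℂ] {f : Ideal (𝓞 K)} (χ : coprimeIdeals f →* ℂˣ) :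
    IntermediateField K ℂ :=
  IntermediateField.adjoin K ((fun a => ((χ a : ℂˣ) : ℂ)) '' genusSet f)

/-- `L`: the subfield of `ℂ` generated over `K` by the values of `ε`. -/
def epsField [Algebra K ℂ] {f : Ideal (𝓞 K)} (ε : ((𝓞 K) ⧸ f)ˣ →* ℂˣ) :
    IntermediateField K ℂ :=
  IntermediateField.adjoin K (Set.range fun u => ((ε u : ℂˣ) : ℂ))

lemma chi_mem_heckeField [Algebra K ℂ] {f : Ideal (𝓞 K)} (χ : coprimeIdeals f →* ℂˣ)
    (a : coprimeIdeals f) : ((χ a : ℂˣ) : ℂ) ∈ heckeField χ :=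
  IntermediateField.subset_adjoin K _ ⟨a, rfl⟩

/-- `ξ` is a generator of `μ₂(ε)`, the group of elements of 2-power order
in the image of `ε`. -/
def IsMu2Gen {f : Ideal (𝓞 K)} (ε : ((𝓞 K) ⧸ f)ˣ →* ℂˣ) (ξ : ℂˣ) : Prop :=
  (∃ u, ε u = ξ) ∧ (∃ k : ℕ, ξ ^ 2 ^ k = 1) ∧
  ∀ ζ : ℂˣ, (∃ u, ε u = ζ) → (∃ k : ℕ, ζ ^ 2 ^ k = 1) → ∃ m : ℕ, ζ = ξ ^ m

/-- Condition (3.6) on `ε`. -/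
def Cond36 (D : ℕ) {f : Ideal (𝓞 K)} (ε : ((𝓞 K) ⧸ f)ˣ →* ℂˣ) : Prop :=
  (∀ u, (ε u) ^ 12 = 1) ∧ (¬ 3 ∣ D → ∀ u, (ε u) ^ 4 = 1) ∧
    (¬ 2 ∣ D → ∀ u, (ε u) ^ 6 = 1) ∧ (Nat.gcd 6 D = 1 → ∀ u, (ε u) ^ 2 = 1)

end

instance FractionalIdeal.instIsMulTorsionFreeUnits {R K : Type*} [CommRing R] [IsDedekindDomain R]
    [Field K] [Algebra R K] [IsFractionRing R K] :
    IsMulTorsionFree (FractionalIdeal R⁰ K)ˣ where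
  pow_left_injective n hn I J hIJ := by
    have hcount (v : IsDedekindDomain.HeightOneSpectrum R) : count K v I = count K v J := by
      have h := congrArg (fun L : (FractionalIdeal R⁰ K)ˣ => count K v L) hIJ
      simp only [Units.val_pow_eq_pow_val, count_pow] at h
      exact mul_left_cancel₀ (by exact_mod_cast hn) h
    apply Units.ext
    rw [← finprod_heightOneSpectrum_factorization' K I.ne_zero,
      ← finprod_heightOneSpectrum_factorization' K J.ne_zero]
    simp_rw [hcount]

theorem exists_pow_mem_range_toPrincipalIdeal {R K : Type*} [CommRing R] [IsDedekindDomain R]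
    [Field K] [Algebra R K] [IsFractionRing R K] [Finite (ClassGroup R)]
    (I : (FractionalIdeal R⁰ K)ˣ) : ∃ h : ℕ, h ≠ 0 ∧ I ^ h ∈ (toPrincipalIdeal R K).range := by
  refine ⟨orderOf (ClassGroup.mk K I), (isOfFinOrder_of_finite _).orderOf_pos.ne', ?_⟩
  have hprincipal : ((I ^ orderOf (ClassGroup.mk K I) : (FractionalIdeal R⁰ K)ˣ) :
      Submodule R K).IsPrincipal := by
    rw [← ClassGroup.mk_eq_one_iff, map_pow, pow_orderOf_eq_one]
  obtain ⟨x, hx⟩ := hprincipal.principal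
  exact mem_principal_ideals_iff.mpr
    ⟨x, coeToSubmodule_injective (by simp only [coe_spanSingleton, hx])⟩

theorem Ideal.Quotient.isUnit_mk_of_isCoprime_span {R : Type*} [CommRing R] {I : Ideal R} {x : R}
    (hx : IsCoprime (Ideal.span {x}) I) : IsUnit (Ideal.Quotient.mk I x) := by
  obtain ⟨yx, hyx, j, hj, hyxj⟩ := Ideal.isCoprime_iff_exists.mp hx
  obtain ⟨y, rfl⟩ := Ideal.mem_span_singleton'.mp hyx
  refine IsUnit.of_mul_eq_one_right (Ideal.Quotient.mk I y) ?_
  rw [← map_mul, ← map_one (Ideal.Quotient.mk I), Ideal.Quotient.eq]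
  convert I.neg_mem hj using 1
  linear_combination hyxj

theorem QuotientGroup.map_injective_of_comap_le {G H : Type*} [Group G] [Group H]
    {N : Subgroup G} [N.Normal] {M : Subgroup H} [M.Normal] {f : G →* H}
    (h : N ≤ M.comap f) (h' : M.comap f ≤ N) : Function.Injective (QuotientGroup.map N M f h) := by
  rw [← MonoidHom.ker_eq_bot_iff, ker_map, eq_bot_iff, Subgroup.map_le_iff_le_comap,
    MonoidHom.comap_bot, ker_mk']
  exact h'

noncomputable def MonoidHom.unitsOfMemRange {K L G : Type*} [Field K] [Field L] [Algebra K L]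
    [Monoid G]
    (φ : G →* Lˣ) (hφ : ∀ g, (φ g : L) ∈ (algebraMap K L).range) : G →* Kˣ :=
  (MonoidHom.ofInjective (Units.map_injective (f := (algebraMap K L : K →* L))
    (algebraMap K L).injective)).symm.toMonoidHom.comp
    (φ.codRestrict _ fun g => by
      obtain ⟨y, hy⟩ := hφ g
      have hy0 : y ≠ 0 := by rintro rfl; exact (φ g).ne_zero (by rw [← hy, map_zero])
      exact ⟨Units.mk0 y hy0, Units.ext hy⟩)

theorem MonoidHom.algebraMap_unitsOfMemRange {K L G : Type*} [Field K] [Field L] [Algebra K L]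
    [Monoid G] (φ : G →* Lˣ) (hφ : ∀ g, (φ g : L) ∈ (algebraMap K L).range) (g : G) :
    algebraMap K L (φ.unitsOfMemRange hφ g) = φ g :=
  congrArg Units.val (MonoidHom.apply_ofInjective_symm
    (Units.map_injective (f := (algebraMap K L : K →* L)) (algebraMap K L).injective) _)

theorem FractionalIdeal.ne_zero_of_coe_unit_eq_spanSingleton {R K : Type*} [CommRing R] [Field K]
    [Algebra R K] [IsFractionRing R K] {I : (FractionalIdeal R⁰ K)ˣ} {x : K}
    (hI : (I : FractionalIdeal R⁰ K) = spanSingleton R⁰ x) : x ≠ 0 :=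
  fun hx => I.ne_zero (by rw [hI, hx, spanSingleton_zero])

section HeckeCharacter

variable {K : Type*} [Field K] [NumberField K]

theorem exists_isCoprime_div_eq_of_mem_coprimeIdeals {f : Ideal (𝓞 K)}
    {a : (FractionalIdeal (𝓞 K)⁰ K)ˣ} (ha : a ∈ coprimeIdeals f) {x : K}
    (hx : (a : FractionalIdeal (𝓞 K)⁰ K) = spanSingleton _ x) :
    ∃ β γ : 𝓞 K, IsCoprime (Ideal.span {β}) f ∧ IsCoprime (Ideal.span {γ}) f ∧
      algebraMap (𝓞 K) K β / algebraMap (𝓞 K) K γ = x := by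
  obtain ⟨b, c, hb, hc, habc⟩ := ha
  obtain ⟨γ, hγc, j, hj, hγj⟩ := Ideal.isCoprime_iff_exists.mp hc
  have hγ : IsCoprime (Ideal.span {γ}) f :=
    Ideal.isCoprime_iff_exists.mpr ⟨γ, Ideal.mem_span_singleton_self γ, j, hj, hγj⟩
  by_cases hγ0 : γ = 0
  · have hf : f = 1 := by
      rw [Ideal.one_eq_top, Ideal.eq_top_iff_one, ← hγj, hγ0, zero_add]
      exact hj
    obtain ⟨β, δ, -, hdiv⟩ := IsFractionRing.div_surjective (A := 𝓞 K) x
    exact ⟨β, δ, hf ▸ isCoprime_one_right, hf ▸ isCoprime_one_right, hdiv⟩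
  -- `γ ≡ 1 mod f` lies in `c`, so `β := xγ` lies in `ac = b`
  have hxγ : x * algebraMap (𝓞 K) K γ ∈ (b : FractionalIdeal (𝓞 K)⁰ K) :=
    habc ▸ mul_mem_mul (hx ▸ mem_spanSingleton_self _ x) ((mem_coeIdeal _).mpr ⟨γ, hγc, rfl⟩)
  obtain ⟨β, -, hβ⟩ := (mem_coeIdeal _).mp hxγ
  have hβc : Ideal.span {β} * c = b * Ideal.span {γ} := by
    apply coeIdeal_injective (K := K)
    dsimp only
    rw [coeIdeal_mul, coeIdeal_mul, coeIdeal_span_singleton, coeIdeal_span_singleton, hβ,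
      ← spanSingleton_mul_spanSingleton, ← hx, ← habc]
    ring
  refine ⟨β, γ, ?_, hγ, ?_⟩
  · exact IsCoprime.of_mul_left_left (hβc ▸ hb.mul_left hγ)
  · rw [hβ, mul_div_cancel_right₀]
    exact (map_ne_zero_iff _ (IsFractionRing.injective (𝓞 K) K)).mpr hγ0

variable [Algebra K ℂ] {f : Ideal (𝓞 K)} {ε : ((𝓞 K) ⧸ f)ˣ →* ℂˣ} {χ : coprimeIdeals f →* ℂˣ}

theorem IsHeckeChar.exists_rootOfUnity_mul (hχ : IsHeckeChar ε χ) (hf : f ≠ ⊥) {β γ : 𝓞 K}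
    (hβ : IsCoprime (Ideal.span {β}) f) (hγ : IsCoprime (Ideal.span {γ}) f) {a : coprimeIdeals f}
    (ha : ((a : (FractionalIdeal (𝓞 K)⁰ K)ˣ) : FractionalIdeal (𝓞 K)⁰ K) =
      spanSingleton (𝓞 K)⁰ (algebraMap (𝓞 K) K β / algebraMap (𝓞 K) K γ)) :
    ∃ ζ ∈ heckeField χ, (∃ m : ℕ, 0 < m ∧ ζ ^ m = 1) ∧
      ((χ a : ℂˣ) : ℂ) = ζ * algebraMap K ℂ (algebraMap (𝓞 K) K β / algebraMap (𝓞 K) K γ) := by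
  set α := algebraMap (𝓞 K) K β / algebraMap (𝓞 K) K γ
  obtain ⟨u, hu⟩ := Ideal.Quotient.isUnit_mk_of_isCoprime_span hβ
  obtain ⟨v, hv⟩ := Ideal.Quotient.isUnit_mk_of_isCoprime_span hγ
  have hχa : ((χ a : ℂˣ) : ℂ) = ((ε (u * v⁻¹) : ℂˣ) : ℂ) * algebraMap K ℂ α := by
    rw [hχ β γ hβ hγ u v hu hv a ha, map_mul, map_inv, Units.val_mul, Units.val_inv_eq_inv_val]
  have hα : algebraMap K ℂ α ≠ 0 :=
    (_root_.map_ne_zero _).mpr (FractionalIdeal.ne_zero_of_coe_unit_eq_spanSingleton ha)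
  have : Finite ((𝓞 K) ⧸ f) := Ideal.finiteQuotientOfFreeOfNeBot f hf
  have hfin : IsOfFinOrder (ε (u * v⁻¹)) := ε.isOfFinOrder (isOfFinOrder_of_finite _)
  refine ⟨_, ?_, ⟨orderOf (ε (u * v⁻¹)), hfin.orderOf_pos, ?_⟩, hχa⟩
  · rw [← mul_inv_cancel_right₀ hα ((ε (u * v⁻¹) : ℂˣ) : ℂ), ← hχa]
    exact mul_mem (chi_mem_heckeField χ a) (inv_mem ((heckeField χ).algebraMap_mem α))
  · rw [← Units.val_pow_eq_pow_val, pow_orderOf_eq_one, Units.val_one]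

theorem IsHeckeChar.pow_eq_of_eq_spanSingleton_div (hχ : IsHeckeChar ε χ) (hf : f ≠ ⊥) {n : ℕ}
    (hroots : ∀ ζ : ℂ, ζ ∈ heckeField χ → (∃ m : ℕ, 0 < m ∧ ζ ^ m = 1) → ζ ^ n = 1)
    {β γ : 𝓞 K} (hβ : IsCoprime (Ideal.span {β}) f) (hγ : IsCoprime (Ideal.span {γ}) f)
    {a : coprimeIdeals f}
    (ha : ((a : (FractionalIdeal (𝓞 K)⁰ K)ˣ) : FractionalIdeal (𝓞 K)⁰ K) =
      spanSingleton (𝓞 K)⁰ (algebraMap (𝓞 K) K β / algebraMap (𝓞 K) K γ)) :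
    ((χ a : ℂˣ) : ℂ) ^ n = algebraMap K ℂ (algebraMap (𝓞 K) K β / algebraMap (𝓞 K) K γ) ^ n := by
  obtain ⟨ζ, hζχ, hζ, hχa⟩ := hχ.exists_rootOfUnity_mul hf hβ hγ ha
  rw [hχa, mul_pow, hroots ζ hζχ hζ, one_mul]

theorem IsHeckeChar.pow_eq_of_toPrincipalIdeal_eq (hχ : IsHeckeChar ε χ) (hf : f ≠ ⊥) {n : ℕ}
    (hroots : ∀ ζ : ℂ, ζ ∈ heckeField χ → (∃ m : ℕ, 0 < m ∧ ζ ^ m = 1) → ζ ^ n = 1)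
    {a : coprimeIdeals f} {x : Kˣ} (hx : toPrincipalIdeal (𝓞 K) K x = a) :
    ((χ a : ℂˣ) : ℂ) ^ n = algebraMap K ℂ x ^ n := by
  have hax : ((a : (FractionalIdeal (𝓞 K)⁰ K)ˣ) : FractionalIdeal (𝓞 K)⁰ K) =
      spanSingleton _ (x : K) := by
    rw [← hx, coe_toPrincipalIdeal]
  obtain ⟨β, γ, hβ, hγ, hdiv⟩ := exists_isCoprime_div_eq_of_mem_coprimeIdeals a.2 hax
  rw [← hdiv]
  exact hχ.pow_eq_of_eq_spanSingleton_div hf hroots hβ hγ (hdiv ▸ hax)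

theorem IsHeckeChar.mem_range_toPrincipalIdeal_of_pow_eq (hχ : IsHeckeChar ε χ) (hf : f ≠ ⊥)
    {n : ℕ} (hn : n ≠ 0)
    (hroots : ∀ ζ : ℂ, ζ ∈ heckeField χ → (∃ m : ℕ, 0 < m ∧ ζ ^ m = 1) → ζ ^ n = 1)
    {a : coprimeIdeals f} {x : Kˣ} (hx : ((χ a : ℂˣ) : ℂ) ^ n = algebraMap K ℂ x ^ n) :
    (a : (FractionalIdeal (𝓞 K)⁰ K)ˣ) ∈ (toPrincipalIdeal (𝓞 K) K).range := by
  obtain ⟨h, hh, x₀, hx₀⟩ :=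
    exists_pow_mem_range_toPrincipalIdeal (a : (FractionalIdeal (𝓞 K)⁰ K)ˣ)
  have hχh : ((χ (a ^ h) : ℂˣ) : ℂ) ^ n = algebraMap K ℂ x₀ ^ n :=
    hχ.pow_eq_of_toPrincipalIdeal_eq hf hroots hx₀
  have hpow : x ^ (n * h) = x₀ ^ n := by
    refine Units.val_injective ((algebraMap K ℂ).injective ?_)
    rw [Units.val_pow_eq_pow_val, Units.val_pow_eq_pow_val, map_pow, map_pow, pow_mul, ← hx,
      ← hχh, map_pow, Units.val_pow_eq_pow_val, ← pow_mul, ← pow_mul, mul_comm]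
  refine ⟨x, (pow_left_inj (mul_ne_zero hn hh)).mp ?_⟩
  rw [← map_pow, hpow, map_pow, hx₀, ← pow_mul, mul_comm h n]

end HeckeCharacter

theorem heckeChar_pow_injective_general
    (K : Type) [Field K] [NumberField K] [Algebra K ℂ]
    (f : Ideal (𝓞 K)) (hf : f ≠ ⊥)
    (ε : ((𝓞 K) ⧸ f)ˣ →* ℂˣ)
    (χ : coprimeIdeals f →* ℂˣ) (hχ : IsHeckeChar ε χ)
    (n : ℕ) (hn : 0 < n)
    (hval : ∀ a : coprimeIdeals f, ((χ a : ℂˣ) : ℂ) ^ n ∈ (algebraMap K ℂ).range)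
    (hroots : ∀ ζ : ℂ, ζ ∈ heckeField χ → (∃ m : ℕ, 0 < m ∧ ζ ^ m = 1) → ζ ^ n = 1) :
    (∀ β γ : 𝓞 K, IsCoprime (Ideal.span {β}) f → IsCoprime (Ideal.span {γ}) f →
      ∀ a : coprimeIdeals f,
        ((a : (FractionalIdeal (𝓞 K)⁰ K)ˣ) : FractionalIdeal (𝓞 K)⁰ K) =
          spanSingleton (𝓞 K)⁰ (algebraMap (𝓞 K) K β / algebraMap (𝓞 K) K γ) →
        ∃ x : Kˣ, ((χ a : ℂˣ) : ℂ) ^ n = algebraMap K ℂ (x : K) ^ n) ∧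
    (∀ a : coprimeIdeals f,
      (∃ x : Kˣ, ((χ a : ℂˣ) : ℂ) ^ n = algebraMap K ℂ (x : K) ^ n) →
      (a : (FractionalIdeal (𝓞 K)⁰ K)ˣ) ∈ (toPrincipalIdeal (𝓞 K) K).range) ∧
    (∃ θ : (↥(coprimeIdeals f) ⧸ principalCoprime f) →*
        (Kˣ ⧸ (powMonoidHom n : Kˣ →* Kˣ).range),
      Function.Injective θ ∧
      ∀ (a : coprimeIdeals f) (x : Kˣ),
        algebraMap K ℂ (x : K) = ((χ a : ℂˣ) : ℂ) ^ n →
        θ (QuotientGroup.mk a) = QuotientGroup.mk x) := by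
  have principal_of_pow {a : coprimeIdeals f} {x : Kˣ}
      (hx : ((χ a : ℂˣ) : ℂ) ^ n = algebraMap K ℂ (x : K) ^ n) :
      (a : (FractionalIdeal (𝓞 K)⁰ K)ˣ) ∈ (toPrincipalIdeal (𝓞 K) K).range :=
    hχ.mem_range_toPrincipalIdeal_of_pow_eq hf hn.ne' hroots hx
  let ψ := ((powMonoidHom n).comp χ).unitsOfMemRange (K := K) fun a => by simpa using hval a
  have hψ (a : coprimeIdeals f) (x : Kˣ) : ψ a = x ↔ algebraMap K ℂ x = (χ a : ℂ) ^ n := by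
    rw [← Units.val_inj, ← (algebraMap K ℂ).injective.eq_iff,
      MonoidHom.algebraMap_unitsOfMemRange]
    simp [eq_comm]
  have hP : (powMonoidHom n : Kˣ →* Kˣ).range.comap ψ = principalCoprime f := by
    ext a
    refine ⟨fun ⟨x, hx⟩ => principal_of_pow (x := x) ?_,
      fun ⟨x, hx⟩ => ⟨x, ((hψ a _).mpr ?_).symm⟩⟩
    · simp [← (hψ a _).mp hx.symm]
    · simpa using (hχ.pow_eq_of_toPrincipalIdeal_eq hf hroots hx).symm
  refine ⟨fun β γ hβ hγ a ha => ⟨Units.mk0 _ (ne_zero_of_coe_unit_eq_spanSingleton ha),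
      hχ.pow_eq_of_eq_spanSingleton_div hf hroots hβ hγ ha⟩,
    fun a ⟨x, hx⟩ => principal_of_pow hx,
    QuotientGroup.map _ _ ψ hP.ge, QuotientGroup.map_injective_of_comap_le hP.ge hP.le,
    fun a x hx => ?_⟩
  rw [QuotientGroup.map_mk, (hψ a x).mpr hx]

/-- The map `a ↦ χ(a)ⁿ (K^×)ⁿ` induces a well-defined injective
group homomorphism `I(f)/P(f) → K^×/(K^×)ⁿ`. -/
theorem heckeChar_pow_injective
    (D : ℕ) (hD : 0 < D)
    (K : Type) [Field K] [NumberField K] [Algebra K ℂ]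
    (hdeg : Module.finrank ℚ K = 2)
    (hdisc : NumberField.discr K = -(D : ℤ))
    (himag : ∃ w : K, w ^ 2 = -(D : K) ∧ 0 < (algebraMap K ℂ w).im)
    (f : Ideal (𝓞 K)) (hf : f ≠ ⊥)
    (ε : ((𝓞 K) ⧸ f)ˣ →* ℂˣ)
    (χ : coprimeIdeals f →* ℂˣ) (hχ : IsHeckeChar ε χ)
    (n : ℕ) (hn : 0 < n)
    (hval : ∀ a : coprimeIdeals f, ((χ a : ℂˣ) : ℂ) ^ n ∈ (algebraMap K ℂ).range)
    (hroots : ∀ ζ : ℂ, ζ ∈ heckeField χ → (∃ m : ℕ, 0 < m ∧ ζ ^ m = 1) → ζ ^ n = 1) :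
    (∀ β γ : 𝓞 K, IsCoprime (Ideal.span {β}) f → IsCoprime (Ideal.span {γ}) f →
      ∀ a : coprimeIdeals f,
        ((a : (FractionalIdeal (𝓞 K)⁰ K)ˣ) : FractionalIdeal (𝓞 K)⁰ K) =
          spanSingleton (𝓞 K)⁰ (algebraMap (𝓞 K) K β / algebraMap (𝓞 K) K γ) →
        ∃ x : Kˣ, ((χ a : ℂˣ) : ℂ) ^ n = algebraMap K ℂ (x : K) ^ n) ∧
    (∀ a : coprimeIdeals f,
      (∃ x : Kˣ, ((χ a : ℂˣ) : ℂ) ^ n = algebraMap K ℂ (x : K) ^ n) →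
      (a : (FractionalIdeal (𝓞 K)⁰ K)ˣ) ∈ (toPrincipalIdeal (𝓞 K) K).range) ∧
    (∃ θ : (↥(coprimeIdeals f) ⧸ principalCoprime f) →*
        (Kˣ ⧸ (powMonoidHom n : Kˣ →* Kˣ).range),
      Function.Injective θ ∧
      ∀ (a : coprimeIdeals f) (x : Kˣ),
        algebraMap K ℂ (x : K) = ((χ a : ℂˣ) : ℂ) ^ n →
        θ (QuotientGroup.mk a) = QuotientGroup.mk x) :=
  heckeChar_pow_injective_general K f hf ε χ hχ n hn hval hroots
end

section
/- There exists w ∈ {1, −1} such that χ(α₀^{−1}·𝔭₂) = w·(1 − i)·α₀^{−1}, the right-hand side being computed in ℂ via the fixed embedding of K (note that the fractional ideal α₀^{−1}·𝔭₂ is coprime to f). -/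
open NumberField FractionalIdeal
open scoped nonZeroDivisors

/-!
Write `d = 4e + 1` and `β = √-d - 2e`. Then `α₀² = 2β` and `𝔭₂² = (2)`, so `𝔞 = α₀⁻¹𝔭₂`
satisfies `𝔞⁻² = (β)` and `χ(𝔞)⁻² = ε(β)·β`. Moreover `ε(β) = i`: according to the parity of `e`,
`β ≡ √-d` or `β ≡ (√-d)³ mod 𝔭₂³`, while `β ≡ -2e mod √-d` and `(-2e/d) = (2/d) = (-1)^e`.
Since `((1 - i)/α₀)² = -2i/(2β) = (iβ)⁻¹`, the number `χ(𝔞)·α₀/(1 - i)` squares to `1`.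
That `d ≡ 1 mod 4` comes from `O_K = ℤ[√-d]`: otherwise `(1 + √-d)/2` would be integral.
-/

open NumberField FractionalIdeal Complex
open scoped nonZeroDivisors

section QuadraticOrder

variable {R : Type*} [CommRing R] {w : R}

lemma exists_eq_intCast_add_intCast_mul_of_mem_adjoin {c : ℤ} (hw : w ^ 2 = c) {x : R}
    (hx : x ∈ Algebra.adjoin ℤ {w}) : ∃ a b : ℤ, x = a + b * w := by
  induction hx using Algebra.adjoin_induction with
  | mem x hx => exact ⟨0, 1, by rw [Set.mem_singleton_iff.mp hx]; simp⟩
  | algebraMap r => exact ⟨r, 0, by simp⟩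
  | add x y _ _ hx hy =>
    obtain ⟨a, b, rfl⟩ := hx
    obtain ⟨a', b', rfl⟩ := hy
    exact ⟨a + a', b + b', by push_cast; ring⟩
  | mul x y _ _ hx hy =>
    obtain ⟨a, b, rfl⟩ := hx
    obtain ⟨a', b', rfl⟩ := hy
    exact ⟨a * a' + c * b * b', a * b' + a' * b, by
      push_cast; linear_combination (b * b' : R) * hw⟩

lemma eq_zero_of_intCast_add_intCast_mul_eq_zero [CharZero R] {d : ℕ} (hd : 0 < d)
    (hw : w ^ 2 = -d) {a b : ℤ} (h : (a : R) + b * w = 0) : a = 0 ∧ b = 0 := by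
  have hR : ((a ^ 2 + b ^ 2 * d : ℤ) : R) = 0 := by
    push_cast
    linear_combination ((a : R) - b * w) * h + (b : R) ^ 2 * hw
  have hZ : a ^ 2 + b ^ 2 * d = 0 := by exact_mod_cast hR
  have hb : b ^ 2 * d = 0 := by nlinarith [sq_nonneg a, sq_nonneg b]
  have hd' : (d : ℤ) ≠ 0 := by exact_mod_cast hd.ne'
  have hb0 : b = 0 := pow_eq_zero_iff two_ne_zero |>.mp ((mul_eq_zero.mp hb).resolve_right hd')
  subst hb0
  exact ⟨pow_eq_zero_iff two_ne_zero |>.mp (by simpa using hZ), rfl⟩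

end QuadraticOrder

lemma Ideal.Quotient.isUnit_mk_of_isCoprime {R : Type*} [CommRing R] {I : Ideal R} {x : R}
    (h : IsCoprime (Ideal.span {x}) I) : IsUnit (Ideal.Quotient.mk I x) := by
  obtain ⟨a, ha, b, hb, hab⟩ := Ideal.isCoprime_iff_exists.mp h
  obtain ⟨c, rfl⟩ := Ideal.mem_span_singleton'.mp ha
  have := congrArg (Ideal.Quotient.mk I) hab
  rw [map_add, Ideal.Quotient.eq_zero_iff_mem.mpr hb, add_zero, map_one, map_mul] at this
  exact .of_mul_eq_one_right _ this

lemma exists_two_mul_eq_one_add {K : Type*} [Field K] [NumberField K] {w : 𝓞 K} {k : ℕ}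
    (hw : w ^ 2 = -(4 * k + 3)) : ∃ z : 𝓞 K, 2 * z = 1 + w := by
  have hwK : (w : K) ^ 2 = -(4 * k + 3) := by
    have := congrArg ((↑) : 𝓞 K → K) hw
    push_cast at this
    exact this
  have hint : IsIntegral ℤ ((1 + (w : K)) / 2) := by
    refine ⟨Polynomial.X ^ 2 - Polynomial.X + Polynomial.C ((k : ℤ) + 1), by monicity!, ?_⟩
    simp only [Polynomial.eval₂_add, Polynomial.eval₂_sub, Polynomial.eval₂_pow,
      Polynomial.eval₂_X, Polynomial.eval₂_C]
    push_cast
    linear_combination (1 / 4 : K) * hwK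
  obtain ⟨z, hz⟩ : ∃ z : 𝓞 K, (z : K) = (1 + w) / 2 := ⟨⟨_, hint⟩, rfl⟩
  refine ⟨z, RingOfIntegers.coe_injective ?_⟩
  simp only [map_mul, map_ofNat, map_add, map_one, ← RingOfIntegers.coe_eq_algebraMap, hz]
  ring

lemma mod_four_eq_one_of_adjoin_eq_top {K : Type*} [Field K] [NumberField K] {w : 𝓞 K} {d : ℕ}
    (hd : d % 2 = 1) (hw : w ^ 2 = -d) (hgen : Algebra.adjoin ℤ {w} = ⊤) : d % 4 = 1 := by
  by_contra h
  obtain ⟨k, rfl⟩ : ∃ k, d = 4 * k + 3 := ⟨d / 4, by omega⟩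
  obtain ⟨z, hz⟩ := exists_two_mul_eq_one_add (k := k) (by rw [hw]; push_cast; ring)
  obtain ⟨a, b, rfl⟩ := exists_eq_intCast_add_intCast_mul_of_mem_adjoin (c := -(4 * k + 3 : ℕ))
    (x := z) (by rw [hw]; push_cast; ring) (by rw [hgen]; trivial)
  have := eq_zero_of_intCast_add_intCast_mul_eq_zero (a := 2 * a - 1) (b := 2 * b - 1)
    (by omega) hw (by push_cast; linear_combination hz)
  omega

section TwoAdic

variable {R : Type*} [CommRing R] {w : R} {e : ℕ}

lemma one_add_sq_eq_two_mul (hw : w ^ 2 = -(4 * e + 1)) : (1 + w) ^ 2 = 2 * (w - 2 * e) := by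
  linear_combination hw

lemma span_pair_sq (hw : w ^ 2 = -(4 * e + 1)) :
    Ideal.span {2, 1 + w} ^ 2 = Ideal.span {(2 : R)} := by
  have h2 : (2 : R) ∈ Ideal.span {2, 1 + w} := Ideal.subset_span (by simp)
  have h1w : 1 + w ∈ Ideal.span {2, 1 + w} := Ideal.subset_span (by simp)
  apply le_antisymm
  · rw [sq, Ideal.span_pair_mul_span_pair, Ideal.span_le]
    simp only [Set.insert_subset_iff, Set.singleton_subset_iff, SetLike.mem_coe,
      Ideal.mem_span_singleton]
    exact ⟨dvd_mul_right 2 2, dvd_mul_right 2 _, dvd_mul_left 2 _,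
      ⟨w - 2 * e, by rw [← sq, one_add_sq_eq_two_mul hw]⟩⟩
  · rw [Ideal.span_singleton_le_iff_mem, sq]
    convert sub_mem (sub_mem (Ideal.mul_mem_mul h2 h1w) (Ideal.mul_mem_mul h1w h1w))
      (Ideal.mul_mem_left _ (e : R) (Ideal.mul_mem_mul h2 h2)) using 1
    linear_combination hw

lemma two_mul_mem_span_pair_pow_three (hw : w ^ 2 = -(4 * e + 1)) {x : R}
    (hx : x ∈ Ideal.span {2, 1 + w}) : 2 * x ∈ Ideal.span {2, 1 + w} ^ 3 := by
  rw [pow_succ, span_pair_sq hw]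
  exact Ideal.mul_mem_mul (Ideal.mem_span_singleton_self 2) hx

lemma sub_two_mul_sub_pow_one_mem_of_even (hw : w ^ 2 = -(4 * e + 1)) (he : Even e) :
    w - 2 * e - w ^ 1 ∈ Ideal.span {2, 1 + w} ^ 3 := by
  obtain ⟨k, rfl⟩ := he
  rw [show w - 2 * ((k + k : ℕ) : R) - w ^ 1 = 2 * (-k * 2) by push_cast; ring]
  exact two_mul_mem_span_pair_pow_three hw
    (Ideal.mul_mem_left _ _ (Ideal.subset_span (by simp)))

lemma sub_two_mul_sub_pow_three_mem_of_odd (hw : w ^ 2 = -(4 * e + 1)) (he : Odd e) :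
    w - 2 * e - w ^ 3 ∈ Ideal.span {2, 1 + w} ^ 3 := by
  obtain ⟨k, rfl⟩ := he
  rw [show w - 2 * ((2 * k + 1 : ℕ) : R) - w ^ 3 =
      2 * ((1 + w) + ((2 * k + 1) * w - (k + 1)) * 2) by
    push_cast at hw ⊢; linear_combination (-w) * hw]
  exact two_mul_mem_span_pair_pow_three hw
    (add_mem (Ideal.subset_span (by simp)) (Ideal.mul_mem_left _ _ (Ideal.subset_span (by simp))))

lemma isCoprime_span_sub_two_mul_span_pair :
    IsCoprime (Ideal.span {w - 2 * e}) (Ideal.span {2, 1 + w}) := by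
  rw [Ideal.isCoprime_iff_exists]
  exact ⟨-(w - 2 * e), Ideal.mem_span_singleton.mpr ⟨-1, by ring⟩, (1 + w) - e * 2,
    sub_mem (Ideal.subset_span (by simp)) (Ideal.mul_mem_left _ _ (Ideal.subset_span (by simp))),
    by ring⟩

lemma isCoprime_span_sub_two_mul_span (hw : w ^ 2 = -(4 * e + 1)) :
    IsCoprime (Ideal.span {w - 2 * e}) (Ideal.span {w}) := by
  rw [Ideal.isCoprime_iff_exists]
  exact ⟨2 * (w - 2 * e), Ideal.mem_span_singleton.mpr ⟨2, mul_comm _ _⟩,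
    w * (-2 - w), Ideal.mem_span_singleton.mpr ⟨-2 - w, rfl⟩, by linear_combination -hw⟩

end TwoAdic

lemma jacobiSym_neg_two_mul (e : ℕ) : jacobiSym (-2 * e) (4 * e + 1) = (-1) ^ e := by
  have hodd : Odd (4 * e + 1) := ⟨2 * e, by ring⟩
  have hprod : jacobiSym 2 (4 * e + 1) * jacobiSym (-2 * e) (4 * e + 1) = 1 := by
    have hmod : 2 * (-2 * e : ℤ) = 1 + ((4 * e + 1 : ℕ) : ℤ) * (-1) := by push_cast; ring
    rw [← jacobiSym.mul_left,
      jacobiSym.mod_left' (a₂ := 1) (by rw [hmod, Int.add_mul_emod_self_left]), jacobiSym.one_left]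
  have htwo : jacobiSym 2 (4 * e + 1) = (-1) ^ e := by
    rw [jacobiSym.at_two hodd, ZMod.χ₈_nat_eq_if_mod_eight]
    rcases Nat.even_or_odd e with he | he
    · rw [he.neg_one_pow, if_neg (by omega), if_pos (by obtain ⟨k, rfl⟩ := he; omega)]
    · rw [he.neg_one_pow, if_neg (by omega), if_neg (by obtain ⟨k, rfl⟩ := he; omega)]
  have hsq : ((-1 : ℤ) ^ e) ^ 2 = 1 := by rw [← pow_mul, mul_comm, pow_mul]; simp
  rw [htwo] at hprod
  linear_combination (-1 : ℤ) ^ e * hprod - jacobiSym (-2 * e) (4 * e + 1) * hsq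

lemma eps_apply_eq_I {R : Type*} [CommRing R] {w : R} {e : ℕ} (hw : w ^ 2 = -(4 * e + 1))
    {f : Ideal R} (ε : (R ⧸ f)ˣ →* ℂˣ)
    (hε : ∀ (u : (R ⧸ f)ˣ) (β : R) (j : ℕ) (n : ℤ),
      (u : R ⧸ f) = Ideal.Quotient.mk f β →
      β - w ^ j ∈ Ideal.span {2, 1 + w} ^ 3 → β - (n : R) ∈ Ideal.span {w} →
      ((ε u : ℂˣ) : ℂ) = I ^ j * ((jacobiSym n (4 * e + 1 : ℕ) : ℤ) : ℂ))
    (u : (R ⧸ f)ˣ) (hu : (u : R ⧸ f) = Ideal.Quotient.mk f (w - 2 * e)) :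
    ((ε u : ℂˣ) : ℂ) = I := by
  have hn : w - 2 * e - ((-2 * e : ℤ) : R) ∈ Ideal.span {w} := by
    push_cast
    simp
  rcases Nat.even_or_odd e with he | he
  · rw [hε u _ 1 _ hu (sub_two_mul_sub_pow_one_mem_of_even hw he) hn, jacobiSym_neg_two_mul,
      he.neg_one_pow]
    simp
  · rw [hε u _ 3 _ hu (sub_two_mul_sub_pow_three_mem_of_odd hw he) hn, jacobiSym_neg_two_mul,
      he.neg_one_pow]
    simp [pow_succ]

lemma IsHeckeChar.apply_eq_of_eq_spanSingleton {K : Type*} [Field K] [NumberField K]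
    [Algebra K ℂ] {f : Ideal (𝓞 K)} {ε : ((𝓞 K) ⧸ f)ˣ →* ℂˣ} {χ : coprimeIdeals f →* ℂˣ}
    (hχ : IsHeckeChar ε χ) {β : 𝓞 K} (hβ : IsCoprime (Ideal.span {β}) f)
    (u : ((𝓞 K) ⧸ f)ˣ) (hu : (u : (𝓞 K) ⧸ f) = Ideal.Quotient.mk f β) (a : coprimeIdeals f)
    (ha : ((a : (FractionalIdeal (𝓞 K)⁰ K)ˣ) : FractionalIdeal (𝓞 K)⁰ K) =
      spanSingleton (𝓞 K)⁰ (algebraMap (𝓞 K) K β)) :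
    ((χ a : ℂˣ) : ℂ) = (ε u : ℂ) * algebraMap K ℂ (algebraMap (𝓞 K) K β) := by
  have hone : IsCoprime (Ideal.span {(1 : 𝓞 K)}) f := by
    rw [Ideal.span_singleton_one, ← Ideal.one_eq_top]
    exact isCoprime_one_left
  simpa using hχ β 1 hβ hone u 1 hu (by simp) a (by simpa using ha)

lemma FractionalIdeal.inv_sq_eq_spanSingleton {R K : Type*} [CommRing R] [IsDedekindDomain R]
    [Field K] [CharZero K] [Algebra R K] [IsFractionRing R K] {p : Ideal R} {α β : R}
    (hp : p ^ 2 = Ideal.span {2}) (hαβ : α ^ 2 = 2 * β) (a : FractionalIdeal R⁰ K)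
    (ha : a = spanSingleton R⁰ (algebraMap R K α)⁻¹ * p) :
    (a ^ 2)⁻¹ = spanSingleton R⁰ (algebraMap R K β) := by
  have hαβK : algebraMap R K α ^ 2 = 2 * algebraMap R K β := by
    rw [← map_pow, hαβ, map_mul, map_ofNat]
  rw [ha, mul_pow, spanSingleton_pow, ← coeIdeal_pow, hp, coeIdeal_span_singleton,
    spanSingleton_mul_spanSingleton, spanSingleton_inv, map_ofNat, inv_pow, mul_inv, inv_inv,
    hαβK]
  congr 1
  field_simp

lemma sq_mul_div_one_sub_I_eq_one {c A B : ℂ} (hA : A ≠ 0) (hAB : A ^ 2 = 2 * B)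
    (hc : c⁻¹ ^ 2 = I * B) : (c * A / (1 - I)) ^ 2 = 1 := by
  have hc0 : c ≠ 0 := by rintro rfl; simp_all
  calc (c * A / (1 - I)) ^ 2 = c ^ 2 * (2 * B) / (-2 * I) := by
        rw [div_pow, mul_pow, hAB, show (1 - I) ^ 2 = -2 * I by linear_combination I_sq]
    _ = c ^ 2 * c⁻¹ ^ 2 := by
        rw [hc, div_eq_iff (by simp)]
        linear_combination 2 * c ^ 2 * B * I_sq
    _ = 1 := by rw [← mul_pow, mul_inv_cancel₀ hc0, one_pow]

theorem hecke_value_at_p2_general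
    (D d : ℕ) (hd : d = D / 4) (h4 : 4 ∣ D) (h8 : ¬ 8 ∣ D)
    (K : Type) [Field K] [NumberField K] [Algebra K ℂ]
    (w : 𝓞 K) (hw : w ^ 2 = -(d : 𝓞 K))
    (hgen : Algebra.adjoin ℤ {w} = ⊤)
    (p2 : Ideal (𝓞 K)) (hp2 : p2 = Ideal.span {2, 1 + w})
    (f : Ideal (𝓞 K)) (hf : f = p2 ^ 3 * Ideal.span {w})
    (ε : ((𝓞 K) ⧸ f)ˣ →* ℂˣ)
    (hε : ∀ (u : ((𝓞 K) ⧸ f)ˣ) (β : 𝓞 K) (j : ℕ) (n : ℤ),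
      (u : (𝓞 K) ⧸ f) = Ideal.Quotient.mk f β →
      β - w ^ j ∈ p2 ^ 3 → β - (n : 𝓞 K) ∈ Ideal.span {w} →
      ((ε u : ℂˣ) : ℂ) = Complex.I ^ j * ((jacobiSym n d : ℤ) : ℂ))
    (χ : coprimeIdeals f →* ℂˣ) (hχ : IsHeckeChar ε χ) :
    ∃ W : ℂ, (W = 1 ∨ W = -1) ∧
      ∀ a : coprimeIdeals f,
        ((a : (FractionalIdeal (𝓞 K)⁰ K)ˣ) : FractionalIdeal (𝓞 K)⁰ K) =
          spanSingleton (𝓞 K)⁰ ((algebraMap (𝓞 K) K (1 + w))⁻¹) *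
            (p2 : FractionalIdeal (𝓞 K)⁰ K) →
        ((χ a : ℂˣ) : ℂ) =
          W * (1 - Complex.I) * (algebraMap K ℂ (algebraMap (𝓞 K) K (1 + w)))⁻¹ := by
  rcases em' (∃ a₀ : coprimeIdeals f,
      ((a₀ : (FractionalIdeal (𝓞 K)⁰ K)ˣ) : FractionalIdeal (𝓞 K)⁰ K) =
        spanSingleton (𝓞 K)⁰ ((algebraMap (𝓞 K) K (1 + w))⁻¹) * p2) with hex | ⟨a₀, ha₀⟩
  · exact ⟨1, Or.inl rfl, fun a ha => (hex ⟨a, ha⟩).elim⟩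
  subst hp2 hf
  obtain ⟨e, rfl⟩ : ∃ e, d = 4 * e + 1 :=
    ⟨d / 4, by have := mod_four_eq_one_of_adjoin_eq_top (by omega) hw hgen; omega⟩
  have hw' : w ^ 2 = -(4 * e + 1) := by rw [hw]; push_cast; ring
  have hβ : IsCoprime (Ideal.span {w - 2 * e}) (Ideal.span {2, 1 + w} ^ 3 * Ideal.span {w}) :=
    isCoprime_span_sub_two_mul_span_pair.pow_right.mul_right (isCoprime_span_sub_two_mul_span hw')
  set u := (Ideal.Quotient.isUnit_mk_of_isCoprime hβ).unit
  have hεu : ((ε u : ℂˣ) : ℂ) = I := eps_apply_eq_I hw' ε hε u (IsUnit.unit_spec _)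
  set A := algebraMap K ℂ (algebraMap (𝓞 K) K (1 + w))
  set B := algebraMap K ℂ (algebraMap (𝓞 K) K (w - 2 * e))
  have hAB : A ^ 2 = 2 * B := by
    rw [← map_pow, ← map_pow, one_add_sq_eq_two_mul hw', map_mul, map_mul, map_ofNat, map_ofNat]
  have hA : A ≠ 0 := by
    refine (_root_.map_ne_zero _).mpr (RingOfIntegers.coe_ne_zero_iff.mpr fun h => ?_)
    have := eq_zero_of_intCast_add_intCast_mul_eq_zero (a := 1) (b := 1) (by omega) hw
      (by simpa using h)
    omega
  have hχa₀ := hχ.apply_eq_of_eq_spanSingleton hβ u (IsUnit.unit_spec _) (a₀ ^ 2)⁻¹ (by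
    push_cast
    exact inv_sq_eq_spanSingleton (span_pair_sq hw') (one_add_sq_eq_two_mul hw') _ ha₀)
  rw [hεu, map_inv, map_pow, Units.val_inv_eq_inv_val, Units.val_pow_eq_pow_val, ← inv_pow]
    at hχa₀
  refine ⟨χ a₀ * A / (1 - I), sq_eq_one_iff.mp (sq_mul_div_one_sub_I_eq_one hA hAB hχa₀),
    fun a ha => ?_⟩
  obtain rfl : a = a₀ := Subtype.ext (Units.ext (ha.trans ha₀.symm))
  have h1I : (1 - I) ≠ 0 := fun h => by simpa using congrArg im h
  field_simp

/-- `χ(α₀⁻¹𝔭₂) = W·(1 − i)·α₀⁻¹` for some sign `W = ±1`,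
where `α₀ = 1 + √−d`. -/
theorem hecke_value_at_p2
    (D d : ℕ) (hD : 4 < D) (hd : d = D / 4) (h4 : 4 ∣ D) (h8 : ¬ 8 ∣ D)
    (K : Type) [Field K] [NumberField K] [Algebra K ℂ]
    (hdeg : Module.finrank ℚ K = 2)
    (hdisc : NumberField.discr K = -(D : ℤ))
    (w : 𝓞 K) (hw : w ^ 2 = -(d : 𝓞 K))
    (hwim : 0 < (algebraMap K ℂ (algebraMap (𝓞 K) K w)).im)
    (hgen : Algebra.adjoin ℤ {w} = ⊤)
    (p2 : Ideal (𝓞 K)) (hp2 : p2 = Ideal.span {2, 1 + w})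
    (f : Ideal (𝓞 K)) (hf : f = p2 ^ 3 * Ideal.span {w})
    (ε : ((𝓞 K) ⧸ f)ˣ →* ℂˣ)
    (hε : ∀ (u : ((𝓞 K) ⧸ f)ˣ) (β : 𝓞 K) (j : ℕ) (n : ℤ),
      (u : (𝓞 K) ⧸ f) = Ideal.Quotient.mk f β →
      β - w ^ j ∈ p2 ^ 3 → β - (n : 𝓞 K) ∈ Ideal.span {w} →
      ((ε u : ℂˣ) : ℂ) = Complex.I ^ j * ((jacobiSym n d : ℤ) : ℂ))
    (χ : coprimeIdeals f →* ℂˣ) (hχ : IsHeckeChar ε χ) :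
    ∃ W : ℂ, (W = 1 ∨ W = -1) ∧
      ∀ a : coprimeIdeals f,
        ((a : (FractionalIdeal (𝓞 K)⁰ K)ˣ) : FractionalIdeal (𝓞 K)⁰ K) =
          spanSingleton (𝓞 K)⁰ ((algebraMap (𝓞 K) K (1 + w))⁻¹) *
            (p2 : FractionalIdeal (𝓞 K)⁰ K) →
        ((χ a : ℂˣ) : ℂ) =
          W * (1 - Complex.I) * (algebraMap K ℂ (algebraMap (𝓞 K) K (1 + w)))⁻¹ :=
  hecke_value_at_p2_general D d hd h4 h8 K w hw hgen p2 hp2 f hf ε hε χ hχ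
end

section
/- Let a, b ∈ ℤ and set β = α₀·(a + b·(1−√−d)/2) = (a + b·(1+d)/2) + a√−d ∈ O_K, where α₀ = 1 + √−d. Assume the ideal βO_K is coprime to D·O_K (so 2a + b is odd) and that 2a + b > 0. Then ε(β) = (−D/(2a+b)) if a is even, and ε(β) = i·(−D/(2a+b)) if a is odd, where (−D/(2a+b)) denotes the Jacobi symbol. -/
open NumberField FractionalIdeal
open scoped nonZeroDivisors

section AuxEps

set_option linter.unusedSectionVars false

variable {K : Type} [Field K] [NumberField K] [Algebra K ℂ]

private lemma eps_indep (w : 𝓞 K)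
    (hwim : 0 < (algebraMap K ℂ (algebraMap (𝓞 K) K w)).im)
    {x y : ℤ} (h : (x : 𝓞 K) + (y : 𝓞 K) * w = 0) : x = 0 ∧ y = 0 := by
  set z := algebraMap K ℂ (algebraMap (𝓞 K) K w) with hz
  have h' : (x : ℂ) + (y : ℂ) * z = 0 := by
    have := congrArg (fun t => algebraMap K ℂ (algebraMap (𝓞 K) K t)) h
    simpa [_root_.map_add, _root_.map_mul, map_intCast] using this
  have him : (y : ℝ) * z.im = 0 := by
    have := congrArg Complex.im h'
    simpa [Complex.add_im, Complex.mul_im] using this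
  have hy : y = 0 := by
    rcases mul_eq_zero.mp him with h1 | h1
    · exact_mod_cast h1
    · exact absurd h1 (ne_of_gt hwim)
  subst hy
  have hx : (x : ℂ) = 0 := by simpa using h'
  exact ⟨by exact_mod_cast hx, rfl⟩

private lemma eps_repr (d : ℕ) (w : 𝓞 K) (hw : w ^ 2 = -(d : 𝓞 K))
    (hgen : Algebra.adjoin ℤ {w} = ⊤) (ξ : 𝓞 K) :
    ∃ x y : ℤ, ξ = (x : 𝓞 K) + (y : 𝓞 K) * w := by
  have hξ : ξ ∈ Algebra.adjoin ℤ {w} := hgen ▸ Algebra.mem_top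
  induction hξ using Algebra.adjoin_induction with
  | mem x hx =>
    exact ⟨0, 1, by simp [Set.mem_singleton_iff.mp hx]⟩
  | algebraMap r => exact ⟨r, 0, by simp⟩
  | add x y hx hy ihx ihy =>
    obtain ⟨a1, b1, e1⟩ := ihx; obtain ⟨a2, b2, e2⟩ := ihy
    exact ⟨a1 + a2, b1 + b2, by rw [e1, e2]; push_cast; ring⟩
  | mul x y hx hy ihx ihy =>
    obtain ⟨a1, b1, e1⟩ := ihx; obtain ⟨a2, b2, e2⟩ := ihy
    refine ⟨a1 * a2 - (d : ℤ) * b1 * b2, a1 * b2 + a2 * b1, ?_⟩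
    rw [e1, e2]
    push_cast
    linear_combination ((b1 : 𝓞 K) * (b2 : 𝓞 K)) * hw

private lemma eps_d_mod_four (d : ℕ) (hdodd : d % 2 = 1) (w : 𝓞 K)
    (hw : w ^ 2 = -(d : 𝓞 K))
    (hwim : 0 < (algebraMap K ℂ (algebraMap (𝓞 K) K w)).im)
    (hgen : Algebra.adjoin ℤ {w} = ⊤) : d % 4 = 1 := by
  by_contra hne
  obtain ⟨k, hk⟩ : ∃ k : ℤ, (1 : ℤ) + d = 4 * k := ⟨((1 : ℤ) + d) / 4, by omega⟩
  have hwK : (algebraMap (𝓞 K) K w) ^ 2 = -(d : K) := by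
    have := congrArg (algebraMap (𝓞 K) K) hw
    simpa [map_pow, map_neg] using this
  have hkK : (1 : K) + d = 4 * k := by exact_mod_cast hk
  have hint : IsIntegral ℤ ((1 + algebraMap (𝓞 K) K w) / 2) := by
    refine ⟨Polynomial.X ^ 2 - Polynomial.X + Polynomial.C k, ?_, ?_⟩
    · monicity!
    · simp only [Polynomial.eval₂_add, Polynomial.eval₂_sub, Polynomial.eval₂_pow,
        Polynomial.eval₂_X, Polynomial.eval₂_C]
      rw [show (algebraMap ℤ K) k = (k : K) from by simp]
      linear_combination (1 / 4 : K) * hwK - (1 / 4 : K) * hkK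
  obtain ⟨θ, hθ⟩ : ∃ θ : 𝓞 K, algebraMap (𝓞 K) K θ = (1 + algebraMap (𝓞 K) K w) / 2 :=
    ⟨⟨_, hint⟩, rfl⟩
  have h2θ : 2 * θ = 1 + w := by
    apply NumberField.RingOfIntegers.coe_injective
    rw [_root_.map_mul, _root_.map_add, _root_.map_one, _root_.map_ofNat, hθ]
    ring
  obtain ⟨x, y, hxy⟩ := eps_repr d w hw hgen θ
  have key : ((2 * x - 1 : ℤ) : 𝓞 K) + ((2 * y - 1 : ℤ) : 𝓞 K) * w = 0 := by
    push_cast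
    linear_combination 2 * hxy.symm + h2θ
  obtain ⟨h1, h2⟩ := eps_indep w hwim key
  omega

private lemma eps_mem_p2_cubed (d : ℕ) (hd1 : d % 4 = 1) (w : 𝓞 K)
    (hw : w ^ 2 = -(d : 𝓞 K))
    (p2 : Ideal (𝓞 K)) (hp2 : p2 = Ideal.span {2, 1 + w})
    {u v : ℤ} (hu : 2 ∣ u) (hv : 2 ∣ v) (huv : 4 ∣ u - v) :
    (u : 𝓞 K) + (v : 𝓞 K) * w ∈ p2 ^ 3 := by
  have h2 : (2 : 𝓞 K) ∈ p2 := hp2 ▸ Ideal.subset_span (by simp)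
  have h1w : (1 + w : 𝓞 K) ∈ p2 := hp2 ▸ Ideal.subset_span (by simp)
  have h2sq : (2 : 𝓞 K) ∈ p2 ^ 2 := by
    have hA : (4 : 𝓞 K) ∈ p2 ^ 2 := by
      rw [sq]
      have := Ideal.mul_mem_mul h2 h2
      convert this using 1
      norm_num
    have hB : (((1 : ℤ) + d : ℤ) : 𝓞 K) ∈ p2 ^ 2 := by
      rw [sq]
      have h := Ideal.mul_mem_mul h1w (Ideal.sub_mem _ h2 h1w)
      convert h using 1
      push_cast
      linear_combination hw
    obtain ⟨k, hk⟩ : (4 : ℤ) ∣ ((d : ℤ) - 1) := ⟨((d : ℤ) - 1) / 4, by omega⟩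
    have hkO : ((d : 𝓞 K)) - 1 = 4 * (k : 𝓞 K) := by
      have := congrArg (fun t : ℤ => ((t : ℤ) : 𝓞 K)) hk
      push_cast at this
      linear_combination this
    have he : (2 : 𝓞 K) = (((1 : ℤ) + d : ℤ) : 𝓞 K) - (k : 𝓞 K) * 4 := by
      push_cast
      linear_combination -hkO
    rw [he]
    exact Ideal.sub_mem _ hB (Ideal.mul_mem_left _ _ hA)
  have h4c : (4 : 𝓞 K) ∈ p2 ^ 3 := by
    rw [pow_succ]
    have := Ideal.mul_mem_mul h2sq h2
    convert this using 1
    norm_num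
  have h22w : (2 + 2 * w : 𝓞 K) ∈ p2 ^ 3 := by
    rw [pow_succ]
    have := Ideal.mul_mem_mul h2sq h1w
    convert this using 1
    ring
  obtain ⟨v2, hv2⟩ := hv
  obtain ⟨s, hs⟩ := huv
  have he : (u : 𝓞 K) + (v : 𝓞 K) * w = (s : 𝓞 K) * 4 + (v2 : 𝓞 K) * (2 + 2 * w) := by
    have hu' : u = 4 * s + 2 * v2 := by omega
    rw [hu', hv2]
    push_cast
    ring
  rw [he]
  exact Ideal.add_mem _ (Ideal.mul_mem_left _ _ h4c) (Ideal.mul_mem_left _ _ h22w)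

private lemma eps_jacobi_key (d m' : ℕ) (n : ℤ) (hd1 : d % 4 = 1) (hm'odd : m' % 2 = 1)
    (hcong : (4 * n) % (d : ℤ) = (2 * (m' : ℤ)) % (d : ℤ)) :
    jacobiSym (-(4 * (d : ℤ))) m' =
      ZMod.χ₄ (m' : ZMod 4) * ZMod.χ₈ (d : ZMod 8) * jacobiSym n d := by
  have hdodd : d % 2 = 1 := by omega
  have hg2d : Int.gcd 2 (d : ℤ) = 1 := by
    have : Nat.gcd 2 d = 1 := by
      rw [Nat.gcd_rec]
      simp [hdodd]
    simpa [Int.gcd] using this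
  have hg2m : Int.gcd 2 (m' : ℤ) = 1 := by
    have : Nat.gcd 2 m' = 1 := by
      rw [Nat.gcd_rec]
      simp [hm'odd]
    simpa [Int.gcd] using this
  have h4d : jacobiSym 4 d = 1 := by
    rw [show (4 : ℤ) = 2 ^ 2 by norm_num]
    exact jacobiSym.sq_one' hg2d
  have h4m : jacobiSym 4 m' = 1 := by
    rw [show (4 : ℤ) = 2 ^ 2 by norm_num]
    exact jacobiSym.sq_one' hg2m
  have step1 : jacobiSym n d = ZMod.χ₈ (d : ZMod 8) * jacobiSym (m' : ℤ) d := by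
    have e1 : jacobiSym (4 * n) d = jacobiSym (2 * (m' : ℤ)) d := jacobiSym.mod_left' hcong
    rw [jacobiSym.mul_left, h4d, one_mul] at e1
    rw [e1, jacobiSym.mul_left, jacobiSym.at_two (Nat.odd_iff.mpr hdodd)]
  have hrec : jacobiSym ((d : ℤ)) m' = jacobiSym ((m' : ℤ)) d :=
    jacobiSym.quadratic_reciprocity_one_mod_four hd1 (Nat.odd_iff.mpr hm'odd)
  have step2 : jacobiSym (-(4 * (d : ℤ))) m' =
      ZMod.χ₄ (m' : ZMod 4) * jacobiSym ((m' : ℤ)) d := by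
    rw [show (-(4 * (d : ℤ))) = (-1) * (4 * (d : ℤ)) by ring, jacobiSym.mul_left,
      jacobiSym.mul_left, jacobiSym.at_neg_one (Nat.odd_iff.mpr hm'odd), h4m, hrec]
    ring
  have hχ : ZMod.χ₈ (d : ZMod 8) = 1 ∨ ZMod.χ₈ (d : ZMod 8) = -1 := by
    rw [ZMod.χ₈_nat_eq_if_mod_eight, if_neg (by omega)]
    split <;> simp
  rcases hχ with h | h <;> rw [step2, step1, h] <;> ring

end AuxEps

/-- The values of `ε` on `β = α₀(a + b(1−√−d)/2)` coprime to `D·O_K`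
with `2a + b > 0`. -/
theorem eps_value_on_alpha0_multiples
    (D d : ℕ) (hD : 4 < D) (hd : d = D / 4) (h4 : 4 ∣ D) (h8 : ¬ 8 ∣ D)
    (K : Type) [Field K] [NumberField K] [Algebra K ℂ]
    (hdeg : Module.finrank ℚ K = 2)
    (hdisc : NumberField.discr K = -(D : ℤ))
    (w : 𝓞 K) (hw : w ^ 2 = -(d : 𝓞 K))
    (hwim : 0 < (algebraMap K ℂ (algebraMap (𝓞 K) K w)).im)
    (hgen : Algebra.adjoin ℤ {w} = ⊤)
    (p2 : Ideal (𝓞 K)) (hp2 : p2 = Ideal.span {2, 1 + w})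
    (f : Ideal (𝓞 K)) (hf : f = p2 ^ 3 * Ideal.span {w})
    (ε : ((𝓞 K) ⧸ f)ˣ →* ℂˣ)
    (hε : ∀ (u : ((𝓞 K) ⧸ f)ˣ) (β : 𝓞 K) (j : ℕ) (n : ℤ),
      (u : (𝓞 K) ⧸ f) = Ideal.Quotient.mk f β →
      β - w ^ j ∈ p2 ^ 3 → β - (n : 𝓞 K) ∈ Ideal.span {w} →
      ((ε u : ℂˣ) : ℂ) = Complex.I ^ j * ((jacobiSym n d : ℤ) : ℂ)) :
    ∀ a b : ℤ, ∀ u : ((𝓞 K) ⧸ f)ˣ,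
      IsCoprime
        (Ideal.span {(((a + b * ((1 + (d : ℤ)) / 2) : ℤ) : 𝓞 K) + (a : 𝓞 K) * w)})
        (Ideal.span {(D : 𝓞 K)}) →
      0 < 2 * a + b →
      (u : (𝓞 K) ⧸ f) = Ideal.Quotient.mk f
        (((a + b * ((1 + (d : ℤ)) / 2) : ℤ) : 𝓞 K) + (a : 𝓞 K) * w) →
      ((Even a →
          ((ε u : ℂˣ) : ℂ) = ((jacobiSym (-(D : ℤ)) (2 * a + b).toNat : ℤ) : ℂ)) ∧
        (Odd a →
          ((ε u : ℂˣ) : ℂ) =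
            Complex.I * ((jacobiSym (-(D : ℤ)) (2 * a + b).toNat : ℤ) : ℂ))) := by
  intro a b u hcop hpos hu
  have hDd : D = 4 * d := by omega
  have hdodd : d % 2 = 1 := by omega
  have hd1 : d % 4 = 1 := eps_d_mod_four d hdodd w hw hwim hgen
  set n : ℤ := a + b * ((1 + (d : ℤ)) / 2) with hn_def
  have hh : 2 * ((1 + (d : ℤ)) / 2) = 1 + (d : ℤ) := by omega
  have h2n : 2 * n = (2 * a + b) + b * (d : ℤ) := by
    calc 2 * n = 2 * a + b * (2 * ((1 + (d : ℤ)) / 2)) := by rw [hn_def]; ring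
    _ = (2 * a + b) + b * (d : ℤ) := by rw [hh]; ring
  have hbodd : b % 2 = 1 := by
    by_contra hbe
    obtain ⟨b2, hb2⟩ : 2 ∣ b := by omega
    have hna : 2 ∣ n - a := ⟨b2 * ((1 + (d : ℤ)) / 2), by rw [hn_def, hb2]; ring⟩
    rw [Ideal.isCoprime_iff_exists] at hcop
    obtain ⟨i, hi, j, hj, hij⟩ := hcop
    obtain ⟨s, hs⟩ := Ideal.mem_span_singleton'.mp hi
    obtain ⟨t, ht⟩ := Ideal.mem_span_singleton'.mp hj
    obtain ⟨x, y, hsxy⟩ := eps_repr d w hw hgen s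
    obtain ⟨x2, y2, htxy⟩ := eps_repr d w hw hgen t
    have E : ((x : 𝓞 K) + (y : 𝓞 K) * w) * (((n : ℤ) : 𝓞 K) + (a : 𝓞 K) * w)
        + ((x2 : 𝓞 K) + (y2 : 𝓞 K) * w) * ((D : ℕ) : 𝓞 K) = 1 := by
      rw [← hsxy, ← htxy, hs, ht, hij]
    have key : ((x * n - (d : ℤ) * (a * y) + (D : ℤ) * x2 - 1 : ℤ) : 𝓞 K)
        + ((x * a + y * n + (D : ℤ) * y2 : ℤ) : 𝓞 K) * w = 0 := by
      push_cast
      linear_combination E - ((y : 𝓞 K) * (a : 𝓞 K)) * hw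
    obtain ⟨hU, hV⟩ := eps_indep w hwim key
    obtain ⟨e, he⟩ : ∃ e : ℤ, (d : ℤ) = 2 * e + 1 := ⟨(d : ℤ) / 2, by omega⟩
    obtain ⟨q0, hq0⟩ := hna
    obtain ⟨p, hp⟩ : 2 ∣ x * (n + a) := Dvd.dvd.mul_left ⟨q0 + a, by omega⟩ x
    obtain ⟨q, hq⟩ : 2 ∣ y * (n - d * a) :=
      Dvd.dvd.mul_left ⟨q0 - e * a, by linear_combination hq0 - a * he⟩ y
    obtain ⟨r, hr⟩ : 2 ∣ (D : ℤ) * (x2 + y2) :=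
      dvd_mul_of_dvd_left (by omega : (2 : ℤ) ∣ (D : ℤ)) _
    have hfin : (2 * p) + (2 * q) + (2 * r) - 1 = 0 := by
      rw [← hp, ← hq, ← hr]
      linear_combination hU + hV
    omega
  have hna1 : (n - a) % 2 = 1 := by
    have hodd : Odd (b * ((1 + (d : ℤ)) / 2)) :=
      Int.odd_mul.mpr ⟨Int.odd_iff.mpr hbodd, Int.odd_iff.mpr (by omega)⟩
    have hna : n - a = b * ((1 + (d : ℤ)) / 2) := by rw [hn_def]; ring
    rw [hna]
    exact Int.odd_iff.mp hodd
  set m' : ℕ := (2 * a + b).toNat with hm'_def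
  have hm'' : (m' : ℤ) = 2 * a + b := Int.toNat_of_nonneg (by omega)
  have hm'odd : m' % 2 = 1 := by omega
  have hcong : (4 * n) % (d : ℤ) = (2 * (m' : ℤ)) % (d : ℤ) := by
    have hdvd : (d : ℤ) ∣ (2 * (m' : ℤ)) - 4 * n :=
      ⟨-2 * b, by rw [hm'']; linear_combination (-2) * h2n⟩
    exact Int.modEq_iff_dvd.mpr hdvd
  have hkey := eps_jacobi_key d m' n hd1 hm'odd hcong
  have hD' : (-(D : ℤ)) = -(4 * (d : ℤ)) := by omega
  have hβn : (((n : ℤ) : 𝓞 K) + (a : 𝓞 K) * w) - ((n : ℤ) : 𝓞 K) ∈ Ideal.span {w} :=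
    Ideal.mem_span_singleton.mpr ⟨(a : 𝓞 K), by ring⟩
  rcases Int.even_or_odd a with ha | ha
  · -- a even
    have hae : a % 2 = 0 := Int.even_iff.mp ha
    refine ⟨fun _ => ?_, fun ho => absurd ho (Int.not_odd_iff_even.mpr ha)⟩
    rcases (by omega : (n - a) % 4 = 1 ∨ (n - a) % 4 = 3) with hj | hj
    · -- j = 0
      have hmem : (((n : ℤ) : 𝓞 K) + (a : 𝓞 K) * w) - w ^ 0 ∈ p2 ^ 3 := by
        rw [pow_zero, show (((n : ℤ) : 𝓞 K) + (a : 𝓞 K) * w) - 1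
          = ((n - 1 : ℤ) : 𝓞 K) + ((a : ℤ) : 𝓞 K) * w from by push_cast; ring]
        exact eps_mem_p2_cubed d hd1 w hw p2 hp2 (by omega) (by omega) (by omega)
      have hval := hε u _ 0 n hu hmem hβn
      have hsgn : ZMod.χ₄ (m' : ZMod 4) * ZMod.χ₈ (d : ZMod 8) = 1 := by
        rcases (by omega : d % 8 = 1 ∨ d % 8 = 5) with hd8 | hd8
        · obtain ⟨kk, hkk⟩ : ∃ kk : ℤ, (d : ℤ) = 8 * kk + 1 := ⟨(d : ℤ) / 8, by omega⟩
          obtain ⟨tt, htt⟩ : ∃ tt : ℤ, 2 * n = (2 * a + b) + b + 8 * tt :=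
            ⟨b * kk, by rw [hkk] at h2n; linear_combination h2n⟩
          have hm4 : m' % 4 = 1 := by omega
          rw [ZMod.χ₄_nat_eq_if_mod_four, ZMod.χ₈_nat_eq_if_mod_eight,
            if_neg (by omega), if_pos hm4, if_neg (by omega), if_pos (Or.inl hd8)]
          norm_num
        · obtain ⟨kk, hkk⟩ : ∃ kk : ℤ, (d : ℤ) = 8 * kk + 5 := ⟨(d : ℤ) / 8, by omega⟩
          obtain ⟨tt, htt⟩ : ∃ tt : ℤ, 2 * n = (2 * a + b) + 5 * b + 8 * tt :=
            ⟨b * kk, by rw [hkk] at h2n; linear_combination h2n⟩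
          have hm4 : m' % 4 = 3 := by omega
          rw [ZMod.χ₄_nat_eq_if_mod_four, ZMod.χ₈_nat_eq_if_mod_eight,
            if_neg (by omega), if_neg (by omega), if_neg (by omega), if_neg (by omega)]
          norm_num
      have hsign : jacobiSym (-(D : ℤ)) m' = jacobiSym n d := by
        rw [hD', hkey, hsgn, one_mul]
      rw [hval, hsign, pow_zero, one_mul]
    · -- j = 2
      have hmem : (((n : ℤ) : 𝓞 K) + (a : 𝓞 K) * w) - w ^ 2 ∈ p2 ^ 3 := by
        rw [show (((n : ℤ) : 𝓞 K) + (a : 𝓞 K) * w) - w ^ 2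
          = ((n + d : ℤ) : 𝓞 K) + ((a : ℤ) : 𝓞 K) * w from by push_cast; linear_combination -hw]
        exact eps_mem_p2_cubed d hd1 w hw p2 hp2 (by omega) (by omega) (by omega)
      have hval := hε u _ 2 n hu hmem hβn
      have hsgn : ZMod.χ₄ (m' : ZMod 4) * ZMod.χ₈ (d : ZMod 8) = -1 := by
        rcases (by omega : d % 8 = 1 ∨ d % 8 = 5) with hd8 | hd8
        · obtain ⟨kk, hkk⟩ : ∃ kk : ℤ, (d : ℤ) = 8 * kk + 1 := ⟨(d : ℤ) / 8, by omega⟩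
          obtain ⟨tt, htt⟩ : ∃ tt : ℤ, 2 * n = (2 * a + b) + b + 8 * tt :=
            ⟨b * kk, by rw [hkk] at h2n; linear_combination h2n⟩
          have hm4 : m' % 4 = 3 := by omega
          rw [ZMod.χ₄_nat_eq_if_mod_four, ZMod.χ₈_nat_eq_if_mod_eight,
            if_neg (by omega), if_neg (by omega), if_neg (by omega), if_pos (Or.inl hd8)]
          norm_num
        · obtain ⟨kk, hkk⟩ : ∃ kk : ℤ, (d : ℤ) = 8 * kk + 5 := ⟨(d : ℤ) / 8, by omega⟩
          obtain ⟨tt, htt⟩ : ∃ tt : ℤ, 2 * n = (2 * a + b) + 5 * b + 8 * tt :=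
            ⟨b * kk, by rw [hkk] at h2n; linear_combination h2n⟩
          have hm4 : m' % 4 = 1 := by omega
          rw [ZMod.χ₄_nat_eq_if_mod_four, ZMod.χ₈_nat_eq_if_mod_eight,
            if_neg (by omega), if_pos hm4, if_neg (by omega), if_neg (by omega)]
          norm_num
      have hsign : jacobiSym (-(D : ℤ)) m' = -jacobiSym n d := by
        rw [hD', hkey, hsgn]
        ring
      rw [hval, hsign]
      push_cast
      rw [Complex.I_sq]
      ring
  · -- a odd
    have hao : a % 2 = 1 := Int.odd_iff.mp ha
    refine ⟨fun he => absurd ha (Int.not_odd_iff_even.mpr he), fun _ => ?_⟩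
    rcases (by omega : (n - a) % 4 = 3 ∨ (n - a) % 4 = 1) with hj | hj
    · -- j = 1
      have hmem : (((n : ℤ) : 𝓞 K) + (a : 𝓞 K) * w) - w ^ 1 ∈ p2 ^ 3 := by
        rw [pow_one, show (((n : ℤ) : 𝓞 K) + (a : 𝓞 K) * w) - w
          = ((n : ℤ) : 𝓞 K) + ((a - 1 : ℤ) : 𝓞 K) * w from by push_cast; ring]
        exact eps_mem_p2_cubed d hd1 w hw p2 hp2 (by omega) (by omega) (by omega)
      have hval := hε u _ 1 n hu hmem hβn
      have hsgn : ZMod.χ₄ (m' : ZMod 4) * ZMod.χ₈ (d : ZMod 8) = 1 := by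
        rcases (by omega : d % 8 = 1 ∨ d % 8 = 5) with hd8 | hd8
        · obtain ⟨kk, hkk⟩ : ∃ kk : ℤ, (d : ℤ) = 8 * kk + 1 := ⟨(d : ℤ) / 8, by omega⟩
          obtain ⟨tt, htt⟩ : ∃ tt : ℤ, 2 * n = (2 * a + b) + b + 8 * tt :=
            ⟨b * kk, by rw [hkk] at h2n; linear_combination h2n⟩
          have hm4 : m' % 4 = 1 := by omega
          rw [ZMod.χ₄_nat_eq_if_mod_four, ZMod.χ₈_nat_eq_if_mod_eight,
            if_neg (by omega), if_pos hm4, if_neg (by omega), if_pos (Or.inl hd8)]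
          norm_num
        · obtain ⟨kk, hkk⟩ : ∃ kk : ℤ, (d : ℤ) = 8 * kk + 5 := ⟨(d : ℤ) / 8, by omega⟩
          obtain ⟨tt, htt⟩ : ∃ tt : ℤ, 2 * n = (2 * a + b) + 5 * b + 8 * tt :=
            ⟨b * kk, by rw [hkk] at h2n; linear_combination h2n⟩
          have hm4 : m' % 4 = 3 := by omega
          rw [ZMod.χ₄_nat_eq_if_mod_four, ZMod.χ₈_nat_eq_if_mod_eight,
            if_neg (by omega), if_neg (by omega), if_neg (by omega), if_neg (by omega)]
          norm_num
      have hsign : jacobiSym (-(D : ℤ)) m' = jacobiSym n d := by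
        rw [hD', hkey, hsgn, one_mul]
      rw [hval, hsign, pow_one]
    · -- j = 3
      have hmem : (((n : ℤ) : 𝓞 K) + (a : 𝓞 K) * w) - w ^ 3 ∈ p2 ^ 3 := by
        rw [show (((n : ℤ) : 𝓞 K) + (a : 𝓞 K) * w) - w ^ 3
          = ((n : ℤ) : 𝓞 K) + ((a + d : ℤ) : 𝓞 K) * w from by push_cast; linear_combination (-w) * hw]
        exact eps_mem_p2_cubed d hd1 w hw p2 hp2 (by omega) (by omega) (by omega)
      have hval := hε u _ 3 n hu hmem hβn
      have hsgn : ZMod.χ₄ (m' : ZMod 4) * ZMod.χ₈ (d : ZMod 8) = -1 := by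
        rcases (by omega : d % 8 = 1 ∨ d % 8 = 5) with hd8 | hd8
        · obtain ⟨kk, hkk⟩ : ∃ kk : ℤ, (d : ℤ) = 8 * kk + 1 := ⟨(d : ℤ) / 8, by omega⟩
          obtain ⟨tt, htt⟩ : ∃ tt : ℤ, 2 * n = (2 * a + b) + b + 8 * tt :=
            ⟨b * kk, by rw [hkk] at h2n; linear_combination h2n⟩
          have hm4 : m' % 4 = 3 := by omega
          rw [ZMod.χ₄_nat_eq_if_mod_four, ZMod.χ₈_nat_eq_if_mod_eight,
            if_neg (by omega), if_neg (by omega), if_neg (by omega), if_pos (Or.inl hd8)]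
          norm_num
        · obtain ⟨kk, hkk⟩ : ∃ kk : ℤ, (d : ℤ) = 8 * kk + 5 := ⟨(d : ℤ) / 8, by omega⟩
          obtain ⟨tt, htt⟩ : ∃ tt : ℤ, 2 * n = (2 * a + b) + 5 * b + 8 * tt :=
            ⟨b * kk, by rw [hkk] at h2n; linear_combination h2n⟩
          have hm4 : m' % 4 = 1 := by omega
          rw [ZMod.χ₄_nat_eq_if_mod_four, ZMod.χ₈_nat_eq_if_mod_eight,
            if_neg (by omega), if_pos hm4, if_neg (by omega), if_neg (by omega)]
          norm_num
      have hsign : jacobiSym (-(D : ℤ)) m' = -jacobiSym n d := by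
        rw [hD', hkey, hsgn]
        ring
      rw [hval, hsign]
      have hI3 : Complex.I ^ 3 = -Complex.I := by
        rw [pow_succ, Complex.I_sq]
        ring
      rw [hI3]
      push_cast
      ring
end
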